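/- Let $p$ be an odd prime, let $u$, $v$ be positive integers, and let $s$, $t$ be integers not divisible by $p$. Then for every integer $r \ge 2$, $U(s;u,p^{r+1})\,U(t;v,p^{r+1}) \equiv p^2\, U(s;u,p^r)\,U(t;v,p^r) \pmod{p^{2r+2}}$. -/

import Mathlib

open Finset

/-- `U(s; u, p^r) = ∑_{k=0}^{u p^{r-1} - 1} 1/(kp + s)`. -/
def U (p : ℕ) (s : ℤ) (u r : ℕ) : ℚ :=
  ∑ k ∈ Finset.range (u * p ^ (r - 1)), 1 / ((k : ℚ) * (p : ℚ) + (s : ℚ))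

/-!
Let `S(N) = ∑_{k<N} (kp + s)⁻¹` in `ℤ_[p]`, so that `U(s;u,p^{r+1}) = S(u p^r)`. Cutting
`range (N p)` into `p` blocks of length `N`, `S(N p) - p S(N)` is a sum of differences
`(y + c)⁻¹ - y⁻¹` with `c = m N p`. Each is divisible by `c`, which gives `p^r ∣ S(u p^r)`;
modulo `c²` it is `-c y⁻²`, and summing over the blocks brings in the factor
`∑_{m<p} m = p (p-1)/2`, divisible by `p` because `p` is odd. Hence
`p^{2r+2} ∣ S(u p^{r+1}) - p S(u p^r)`, and the congruence for the products follows from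
`A'B' - p²AB = pA(B' - pB) + (A' - pA)pB + (A' - pA)(B' - pB)`.
-/

theorem sum_range_mul_eq_sum_sum {M : Type*} [AddCommMonoid M] (f : ℕ → M) (N q : ℕ) :
    ∑ k ∈ range (N * q), f k = ∑ m ∈ range q, ∑ j ∈ range N, f (m * N + j) := by
  induction q with
  | zero => simp
  | succ q ih => rw [Nat.mul_succ, sum_range_add, ih, sum_range_succ, Nat.mul_comm N q]

theorem dvd_sum_range_id_of_odd {q : ℕ} (hq : Odd q) : q ∣ ∑ m ∈ range q, m := by
  obtain ⟨k, rfl⟩ := hq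
  refine ⟨k, Nat.eq_of_mul_eq_mul_right two_pos ?_⟩
  rw [sum_range_id_mul_two, Nat.add_sub_cancel]
  ring

section CommRing

variable {R : Type*} [CommRing R] {q : ℕ} {f : ℕ → R}

theorem sum_range_mul_sub_mul_sum_range (f : ℕ → R) (N q : ℕ) :
    ∑ k ∈ range (N * q), f k - q * ∑ k ∈ range N, f k =
      ∑ m ∈ range q, ∑ j ∈ range N, (f (m * N + j) - f j) := by
  simp only [sum_range_mul_eq_sum_sum, sum_sub_distrib, sum_const, card_range, nsmul_eq_mul]

theorem pow_dvd_sum_range_of_dvd_sub (hf : ∀ c j : ℕ, (q : R) * c ∣ f (c + j) - f j)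
    (N r : ℕ) : (q : R) ^ r ∣ ∑ k ∈ range (N * q ^ r), f k := by
  induction r with
  | zero => rw [pow_zero]; exact one_dvd _
  | succ r ih =>
    rw [pow_succ q r, ← mul_assoc, ← sub_add_cancel (∑ k ∈ range _, f k) (q * _),
      sum_range_mul_sub_mul_sum_range]
    refine dvd_add (dvd_sum fun m _ => dvd_sum fun j _ => ?_) ?_
    · refine (Dvd.intro ((m : R) * N) ?_).trans (hf _ j)
      push_cast; ring
    · rw [pow_succ']
      exact mul_dvd_mul_left _ ih

theorem pow_dvd_sum_range_sub_of_dvd_sub (hq : Odd q) {g : ℕ → R}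
    (hg : ∀ c j : ℕ, (q : R) * c ∣ g (c + j) - g j)
    (hf : ∀ c j : ℕ, ((q : R) * c) ^ 2 ∣ f (c + j) - f j + q * c * g j) (N r : ℕ) :
    (q : R) ^ (2 * r + 2) ∣
      ∑ k ∈ range (N * q ^ (r + 1)), f k - q * ∑ k ∈ range (N * q ^ r), f k := by
  rw [pow_succ q r, ← mul_assoc, sum_range_mul_sub_mul_sum_range]
  set L := N * q ^ r
  have hsplit : ∑ m ∈ range q, ∑ j ∈ range L, (f (m * L + j) - f j) =
      ∑ m ∈ range q, ∑ j ∈ range L, (f (m * L + j) - f j + q * (m * L : ℕ) * g j) -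
        q * L * (∑ m ∈ range q, m : ℕ) * ∑ j ∈ range L, g j := by
    simp only [sum_add_distrib, Nat.cast_sum, Nat.cast_mul, sum_mul, mul_sum]
    rw [add_sub_assoc, left_eq_add, sub_eq_zero, sum_comm]
    exact sum_congr rfl fun _ _ => sum_congr rfl fun _ _ => by ring
  have hL : (q : R) ^ r ∣ L := ⟨N, by simp [L, mul_comm]⟩
  rw [hsplit]
  refine dvd_sub (dvd_sum fun m _ => dvd_sum fun j _ => (?_ : _ ∣ _).trans (hf _ j)) ?_
  · rw [pow_add, pow_mul', ← mul_pow, mul_comm _ (q : R), Nat.cast_mul]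
    exact pow_dvd_pow_of_dvd (mul_dvd_mul_left _ (hL.trans (dvd_mul_left _ _))) 2
  · rw [show 2 * r + 2 = 1 + r + 1 + r by ring, pow_add, pow_add, pow_add, pow_one]
    exact mul_dvd_mul (mul_dvd_mul (mul_dvd_mul_left _ hL)
      (Nat.cast_dvd_cast (dvd_sum_range_id_of_odd hq))) (pow_dvd_sum_range_of_dvd_sub hg N r)

theorem sub_add_mul_sq_eq_of_mul_eq_one {x y a b : R} (hx : x * a = 1) (hy : y * b = 1) :
    x - y + (a - b) * y ^ 2 = x * y ^ 2 * (a - b) ^ 2 := by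
  linear_combination (1 - (a - b) * y) * y * hx - (1 - (a - b) * y) * x * hy

theorem sub_dvd_sub_of_mul_eq_one {x y a b : R} (hx : x * a = 1) (hy : y * b = 1) :
    a - b ∣ x - y :=
  ⟨-(x * y), by linear_combination y * hx - x * hy⟩

section Reciprocals

variable {s : R} (hf : ∀ k : ℕ, f k * (k * q + s) = 1)
include hf

theorem mul_dvd_sub_of_mul_eq_one (c j : ℕ) : (q : R) * c ∣ f (c + j) - f j := by
  convert sub_dvd_sub_of_mul_eq_one (hf (c + j)) (hf j) using 1
  push_cast; ring

theorem mul_dvd_sq_sub_sq_of_mul_eq_one (c j : ℕ) :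
    (q : R) * c ∣ f (c + j) ^ 2 - f j ^ 2 := by
  rw [sq_sub_sq]
  exact dvd_mul_of_dvd_right (mul_dvd_sub_of_mul_eq_one hf c j) _

theorem mul_sq_dvd_sub_add_of_mul_eq_one (c j : ℕ) :
    ((q : R) * c) ^ 2 ∣ f (c + j) - f j + q * c * f j ^ 2 := by
  have key := sub_add_mul_sq_eq_of_mul_eq_one (hf (c + j)) (hf j)
  have hab : ((c + j : ℕ) : R) * q + s - (j * q + s) = q * c := by push_cast; ring
  rw [hab] at key
  rw [key]
  exact dvd_mul_left _ _

theorem pow_dvd_sum_range_of_mul_eq_one (N r : ℕ) :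
    (q : R) ^ r ∣ ∑ k ∈ range (N * q ^ r), f k :=
  pow_dvd_sum_range_of_dvd_sub (mul_dvd_sub_of_mul_eq_one hf) N r

theorem pow_dvd_sum_range_sub_of_mul_eq_one (hq : Odd q) (N r : ℕ) :
    (q : R) ^ (2 * r + 2) ∣
      ∑ k ∈ range (N * q ^ (r + 1)), f k - q * ∑ k ∈ range (N * q ^ r), f k :=
  pow_dvd_sum_range_sub_of_dvd_sub hq (mul_dvd_sq_sub_sq_of_mul_eq_one hf)
    (mul_sq_dvd_sub_add_of_mul_eq_one hf) N r

end Reciprocals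

end CommRing

theorem pow_dvd_mul_sub_sq_mul {R : Type*} [CommRing R] {q A A' B B' : R} {n : ℕ} (hn : 1 ≤ n)
    (hA : q ^ n ∣ A) (hB : q ^ n ∣ B)
    (hA' : q ^ (2 * n + 2) ∣ A' - q * A) (hB' : q ^ (2 * n + 2) ∣ B' - q * B) :
    q ^ (2 * n + 4) ∣ A' * B' - q ^ 2 * (A * B) := by
  have hcross : q ^ (2 * n + 4) ∣ q ^ (1 + n + (2 * n + 2)) := pow_dvd_pow q (by omega)
  rw [pow_add q (1 + n), pow_add q 1, pow_one] at hcross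
  have hsq : q ^ (2 * n + 4) ∣ q ^ (2 * n + 2) * q ^ (2 * n + 2) := by
    rw [← pow_add]; exact pow_dvd_pow q (by omega)
  rw [show A' * B' - q ^ 2 * (A * B) = q * A * (B' - q * B) + (A' - q * A) * (q * B) +
      (A' - q * A) * (B' - q * B) by ring]
  refine dvd_add (dvd_add ?_ ?_) (hsq.trans (mul_dvd_mul hA' hB'))
  · exact hcross.trans (mul_dvd_mul (mul_dvd_mul_left q hA) hB')
  · rw [mul_comm (q * q ^ n)] at hcross
    exact hcross.trans (mul_dvd_mul hA' (mul_dvd_mul_left q hB))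

section Padic

variable {p : ℕ} [Fact p.Prime]

theorem PadicInt.isUnit_natCast_mul_add {s : ℤ} (hs : ¬ (p : ℤ) ∣ s) (k : ℕ) :
    IsUnit ((k : ℤ_[p]) * p + s) := by
  have hcast : (k : ℤ_[p]) * p + s = ((k * p + s : ℤ) : ℤ_[p]) := by push_cast; ring
  rw [hcast, PadicInt.isUnit_iff]
  refine le_antisymm (PadicInt.norm_le_one _) (not_lt.mp fun h => hs ?_)
  exact (dvd_add_right (dvd_mul_left _ _)).mp ((PadicInt.norm_int_lt_one_iff_dvd _).mp h)

theorem pow_dvd_num_of_eq_coe_padicInt {x : ℚ} {z : ℤ_[p]} {n : ℕ} (hz : (z : ℚ_[p]) = x)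
    (h : (p : ℤ_[p]) ^ n ∣ z) : (p : ℤ) ^ n ∣ x.num := by
  rw [← PadicInt.pow_p_dvd_int_iff]
  have hnum : (x.num : ℤ_[p]) = z * x.den := by
    apply Subtype.ext
    push_cast
    rw [hz]
    exact_mod_cast (Rat.mul_den_eq_num x).symm
  rw [hnum]
  exact dvd_mul_of_dvd_left h _

theorem U_eq_coe_sum {s : ℤ} {f : ℕ → ℤ_[p]} (hf : ∀ k : ℕ, f k * (k * p + s) = 1) (u n : ℕ) :
    ((U p s u (n + 1) : ℚ) : ℚ_[p]) = ((∑ k ∈ range (u * p ^ n), f k : ℤ_[p]) : ℚ_[p]) := by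
  simp only [U, Nat.add_sub_cancel, one_div, Rat.cast_sum, Rat.cast_inv, PadicInt.coe_sum]
  refine sum_congr rfl fun k _ => (eq_inv_of_mul_eq_one_left ?_).symm
  exact_mod_cast congrArg ((↑) : ℤ_[p] → ℚ_[p]) (hf k)

end Padic

theorem U_product_step_congruence_general
    (p u v : ℕ) (s t : ℤ)
    (hp : p.Prime) (hpodd : Odd p)
    (hps : ¬ (p : ℤ) ∣ s) (hpt : ¬ (p : ℤ) ∣ t) :
    ∀ r : ℕ, 2 ≤ r →
      (p : ℤ) ^ (2 * r + 2) ∣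
        (U p s u (r + 1) * U p t v (r + 1) -
          (p : ℚ) ^ 2 * (U p s u r * U p t v r)).num := by
  have := Fact.mk hp
  intro r hr
  obtain ⟨n, rfl⟩ : ∃ n, r = n + 1 := ⟨r - 1, by omega⟩
  choose f hf using fun k : ℕ => (PadicInt.isUnit_natCast_mul_add hps k).exists_left_inv
  choose g hg using fun k : ℕ => (PadicInt.isUnit_natCast_mul_add hpt k).exists_left_inv
  rw [show 2 * (n + 1) + 2 = 2 * n + 4 by ring]
  refine pow_dvd_num_of_eq_coe_padicInt ?_ (pow_dvd_mul_sub_sq_mul (by omega)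
    (pow_dvd_sum_range_of_mul_eq_one hf u n) (pow_dvd_sum_range_of_mul_eq_one hg v n)
    (pow_dvd_sum_range_sub_of_mul_eq_one hf hpodd u n)
    (pow_dvd_sum_range_sub_of_mul_eq_one hg hpodd v n))
  simp only [PadicInt.coe_sub, PadicInt.coe_mul, PadicInt.coe_pow, PadicInt.coe_natCast,
    Rat.cast_sub, Rat.cast_mul, Rat.cast_pow, Rat.cast_natCast, U_eq_coe_sum hf, U_eq_coe_sum hg]

/-- **Lemma 2.3(c).** For `r ≥ 2`,
`U(s;u,p^{r+1})·U(t;v,p^{r+1}) ≡ p²·U(s;u,p^r)·U(t;v,p^r) (mod p^{2r+2})`. -/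
theorem U_product_step_congruence
    (p u v : ℕ) (s t : ℤ)
    (hp : p.Prime) (hpodd : Odd p) (hu : 0 < u) (hv : 0 < v)
    (hps : ¬ (p : ℤ) ∣ s) (hpt : ¬ (p : ℤ) ∣ t) :
    ∀ r : ℕ, 2 ≤ r →
      (p : ℤ) ^ (2 * r + 2) ∣
        (U p s u (r + 1) * U p t v (r + 1) -
          (p : ℚ) ^ 2 * (U p s u r * U p t v r)).num :=
  U_product_step_congruence_general p u v s t hp hpodd hps hpt
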